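/- arXiv:1410.8395 — 5 statements merged into one kernel-verified Lean document; each statement's English description precedes it below -/
import Mathlib

section
/- A game m is supermodular if and only if its Möbius inversion μ_m satisfies: for all distinct i,j ∈ N and all A ⊆ N∖{i,j}, the sum over B ⊆ A of μ_m(B∪{i,j}) is nonnegative. -/
open Finset

/-- A game is supermodular if `m A + m B ≤ m (A ∪ B) + m (A ∩ B)` for all `A, B`. -/
def Supermod {N : Type*} [DecidableEq N] (m : Finset N → ℝ) : Prop :=
  ∀ A B : Finset N, m A + m B ≤ m (A ∪ B) + m (A ∩ B)

/-- The Möbius inversion of a set function. -/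
def mobius {N : Type*} [DecidableEq N] (m : Finset N → ℝ) (A : Finset N) : ℝ :=
  ∑ B ∈ A.powerset, (-1 : ℝ) ^ (A.card - B.card) * m B

/-! By Möbius inversion the sum in the statement is the second difference
`m (A ∪ {i, j}) - m (A ∪ {i}) - m (A ∪ {j}) + m A`, and supermodularity is equivalent to the
nonnegativity of all second differences: summing them along a chain from `C` to `D` shows that
the marginal gain `m (C ∪ {i}) - m C` increases with `C`, and summing marginal gains along a
chain from `A ∩ B` to `A` gives `m A - m (A ∩ B) ≤ m (A ∪ B) - m B`. -/

def LocallySupermod {N : Type*} [DecidableEq N] (m : Finset N → ℝ) : Prop :=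
  ∀ i j : N, i ≠ j → ∀ A : Finset N, i ∉ A → j ∉ A →
    m (insert i A) + m (insert j A) ≤ m (insert i (insert j A)) + m A

section

variable {N : Type*} [DecidableEq N] {m : Finset N → ℝ}

lemma mobius_insert (m : Finset N → ℝ) {i : N} {B : Finset N} (hi : i ∉ B) :
    mobius m (insert i B) = mobius (fun S => m (insert i S)) B - mobius m B := by
  have hwithout : ∑ D ∈ B.powerset, (-1 : ℝ) ^ (#B + 1 - #D) * m D = -mobius m B := by
    rw [mobius, ← sum_neg_distrib]
    refine sum_congr rfl fun D hD => ?_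
    rw [Nat.sub_add_comm (card_le_card (mem_powerset.1 hD)), pow_succ]
    ring
  have hwith : ∑ D ∈ B.powerset, (-1 : ℝ) ^ (#B + 1 - #(insert i D)) * m (insert i D)
      = mobius (fun S => m (insert i S)) B := by
    refine sum_congr rfl fun D hD => ?_
    rw [card_insert_of_notMem fun h => hi (mem_powerset.1 hD h), Nat.add_sub_add_right]
  rw [mobius, sum_powerset_insert hi, card_insert_of_notMem hi, hwithout, hwith]
  ring

lemma sum_powerset_mobius (m : Finset N → ℝ) (C : Finset N) :
    ∑ B ∈ C.powerset, mobius m B = m C := by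
  induction C using Finset.induction_on generalizing m with
  | empty => simp [mobius]
  | insert i C hi ih =>
    have hinsert : ∑ B ∈ C.powerset, mobius m (insert i B)
        = ∑ B ∈ C.powerset, (mobius (fun S => m (insert i S)) B - mobius m B) :=
      sum_congr rfl fun B hB => mobius_insert m fun h => hi (mem_powerset.1 hB h)
    rw [sum_powerset_insert hi, hinsert, sum_sub_distrib, ih, ih]
    ring

lemma sum_powerset_mobius_insert (m : Finset N → ℝ) {i : N} {A : Finset N} (hi : i ∉ A) :
    ∑ B ∈ A.powerset, mobius m (insert i B) = m (insert i A) - m A := by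
  rw [← sum_powerset_mobius m (insert i A), sum_powerset_insert hi, sum_powerset_mobius]
  ring

lemma sum_powerset_mobius_insert_insert (m : Finset N → ℝ) {i j : N} (hij : i ≠ j)
    {A : Finset N} (hi : i ∉ A) (hj : j ∉ A) :
    ∑ B ∈ A.powerset, mobius m (insert i (insert j B))
      = m (insert i (insert j A)) - m (insert i A) - m (insert j A) + m A := by
  have hiA : i ∉ insert j A := by simp [hi, hij]
  have h := sum_powerset_mobius_insert m hiA
  rw [sum_powerset_insert hj, sum_powerset_mobius_insert m hi] at h
  linarith

lemma Supermod.locallySupermod (h : Supermod m) : LocallySupermod m := by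
  intro i j hij A hi hj
  have hunion : insert i A ∪ insert j A = insert i (insert j A) := by
    rw [insert_union, union_insert, union_self]
  have hinter : insert i A ∩ insert j A = A := by
    rw [insert_inter_of_notMem (by simp [hi, hij]), inter_insert_of_notMem hj, inter_self]
  simpa [hunion, hinter] using h (insert i A) (insert j A)

lemma LocallySupermod.add_le_add_insert (h : LocallySupermod m) {C D : Finset N} (hCD : C ⊆ D)
    {i : N} (hi : i ∉ D) : m (insert i C) + m D ≤ m (insert i D) + m C := by
  suffices key : ∀ E : Finset N, Disjoint C E → i ∉ C ∪ E →
      m (insert i C) + m (C ∪ E) ≤ m (insert i (C ∪ E)) + m C by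
    simpa [union_sdiff_of_subset hCD] using key (D \ C) disjoint_sdiff
      (by rwa [union_sdiff_of_subset hCD])
  intro E
  induction E using Finset.induction_on with
  | empty => simp
  | insert j E _ ih =>
    intro hCE hiCE
    rw [disjoint_insert_right] at hCE
    rw [union_insert, mem_insert, not_or] at hiCE
    rw [union_insert]
    have hjCE : j ∉ C ∪ E := by simp [hCE.1, *]
    have hstep := h i j hiCE.1 (C ∪ E) hiCE.2 hjCE
    linarith [ih hCE.2 hiCE.2]

lemma LocallySupermod.supermod (h : LocallySupermod m) : Supermod m := by
  intro A B
  suffices key : ∀ E : Finset N, Disjoint B E →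
      m (A ∩ B ∪ E) + m B ≤ m (B ∪ E) + m (A ∩ B) by
    have hA : A ∩ B ∪ A \ B = A := sup_inf_sdiff A B
    simpa [hA, union_sdiff_self_eq_union, union_comm B A] using key (A \ B) disjoint_sdiff
  intro E
  induction E using Finset.induction_on with
  | empty => simp [add_comm]
  | insert i E hiE ih =>
    intro hBE
    rw [disjoint_insert_right] at hBE
    have hiBE : i ∉ B ∪ E := by simp [hBE.1, hiE]
    have hsub : A ∩ B ∪ E ⊆ B ∪ E := union_subset_union inter_subset_right subset_rfl
    have hstep := h.add_le_add_insert hsub hiBE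
    rw [union_insert, union_insert]
    linarith [ih hBE.2]

lemma supermod_iff_locallySupermod : Supermod m ↔ LocallySupermod m :=
  ⟨Supermod.locallySupermod, LocallySupermod.supermod⟩

end

theorem stmt3_general {N : Type*} [DecidableEq N]
    (m : Finset N → ℝ) :
    Supermod m ↔
      ∀ i j : N, i ≠ j → ∀ A : Finset N, i ∉ A → j ∉ A →
        0 ≤ ∑ B ∈ A.powerset, mobius m (B ∪ {i, j}) := by
  rw [supermod_iff_locallySupermod]
  refine forall₄_congr fun i j hij A => forall₂_congr fun hi hj => ?_
  simp only [union_insert, union_singleton, sum_powerset_mobius_insert_insert m hij hi hj]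
  constructor <;> intro h <;> linarith

theorem stmt3 {N : Type*} [Fintype N] [DecidableEq N]
    (m : Finset N → ℝ) (hm : m ∅ = 0) :
    Supermod m ↔
      ∀ i j : N, i ≠ j → ∀ A : Finset N, i ∉ A → j ∉ A →
        0 ≤ ∑ B ∈ A.powerset, mobius m (B ∪ {i, j}) :=
  stmt3_general m
end

section
/- If m is a supermodular game, then every marginal vector x^m(π,·), for any enumeration π of N, belongs to the core C(m). -/
/-!
The marginal contributions along `π` telescope, so the sum of `x^m(π,·)` over an initial
segment of `π` is the worth of that segment; in particular it is `m(N)` over all of `N`. For a coalition `S`, add its members in the order of `π`: supermodularity says the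
contribution of `π k` to the part of `S` preceding it is at most its contribution to the whole
segment `seg π k`, which is `x^m(π, π k)`; summing gives `m(S) ≤ ∑_{i ∈ S} x^m(π, i)`.
-/

open Finset

/-- The initial segment `{π 0, ..., π (k-1)}` of the enumeration `π`. -/
def seg {N : Type*} [Fintype N] [DecidableEq N] (π : Fin (Fintype.card N) ≃ N) (k : ℕ) :
    Finset N :=
  (Finset.univ.filter (fun j : Fin (Fintype.card N) => (j : ℕ) < k)).image π

/-- The marginal vector `x^m(π,·)` of the game `m` w.r.t. the enumeration `π`. -/
def marg {N : Type*} [Fintype N] [DecidableEq N] (m : Finset N → ℝ)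
    (π : Fin (Fintype.card N) ≃ N) (i : N) : ℝ :=
  m (seg π ((π.symm i : ℕ) + 1)) - m (seg π ((π.symm i : ℕ)))

/-- The core of a game. -/
def core {N : Type*} [Fintype N] [DecidableEq N] (m : Finset N → ℝ) : Set (N → ℝ) :=
  {v | ∑ i, v i = m Finset.univ ∧ ∀ S : Finset N, m S ≤ ∑ i ∈ S, v i}

theorem Supermod.insert_sub_le_insert_sub {N : Type*} [DecidableEq N] {m : Finset N → ℝ}
    (hsup : Supermod m) {A T : Finset N} {i : N} (hAT : A ⊆ T) (hi : i ∉ T) :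
    m (insert i A) - m A ≤ m (insert i T) - m T := by
  have hunion : insert i A ∪ T = insert i T := by
    rw [insert_union, union_eq_right.2 hAT]
  have hinter : insert i A ∩ T = A := by
    rw [insert_inter_of_notMem hi, inter_eq_left.2 hAT]
  have := hsup (insert i A) T
  rw [hunion, hinter] at this
  linarith

section Enumeration

variable {N : Type*} [Fintype N] [DecidableEq N] (π : Fin (Fintype.card N) ≃ N)

theorem mem_seg {a : N} {k : ℕ} : a ∈ seg π k ↔ (π.symm a : ℕ) < k := by
  simp only [seg, mem_image, mem_filter, mem_univ, true_and]
  exact ⟨fun ⟨j, hj, hja⟩ => by simpa [← hja] using hj, fun h => ⟨π.symm a, h, by simp⟩⟩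

theorem seg_zero : seg π 0 = ∅ := by
  ext a
  simp [mem_seg]

theorem seg_of_card_le {k : ℕ} (hk : Fintype.card N ≤ k) : seg π k = univ := by
  ext a
  simpa [mem_seg] using (π.symm a).isLt.trans_le hk

theorem apply_notMem_seg {k : ℕ} (hk : k < Fintype.card N) : π ⟨k, hk⟩ ∉ seg π k := by
  simp [mem_seg]

theorem seg_succ {k : ℕ} (hk : k < Fintype.card N) :
    seg π (k + 1) = insert (π ⟨k, hk⟩) (seg π k) := by
  ext a
  simp only [mem_insert, mem_seg, Nat.lt_succ_iff_lt_or_eq, ← Equiv.symm_apply_eq,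
    Fin.ext_iff]
  tauto

theorem marg_apply_of_lt (m : Finset N → ℝ) {k : ℕ} (hk : k < Fintype.card N) :
    marg m π (π ⟨k, hk⟩) = m (seg π (k + 1)) - m (seg π k) := by
  simp [marg]

theorem sum_marg_seg {m : Finset N → ℝ} (hm : m ∅ = 0) {k : ℕ} (hk : k ≤ Fintype.card N) :
    ∑ i ∈ seg π k, marg m π i = m (seg π k) := by
  induction k with
  | zero => simp [seg_zero, hm]
  | succ k ih =>
    replace hk : k < Fintype.card N := hk
    rw [seg_succ π hk, sum_insert (apply_notMem_seg π hk), ih hk.le, marg_apply_of_lt π m hk,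
      seg_succ π hk]
    ring

theorem le_sum_marg_inter_seg {m : Finset N → ℝ} (hm : m ∅ = 0) (hsup : Supermod m)
    (S : Finset N) {k : ℕ} (hk : k ≤ Fintype.card N) :
    m (S ∩ seg π k) ≤ ∑ i ∈ S ∩ seg π k, marg m π i := by
  induction k with
  | zero => simp [seg_zero, hm]
  | succ k ih =>
    replace hk : k < Fintype.card N := hk
    specialize ih hk.le
    rw [seg_succ π hk]
    by_cases hS : π ⟨k, hk⟩ ∈ S
    · have hnotMem : π ⟨k, hk⟩ ∉ S ∩ seg π k :=
        fun h => apply_notMem_seg π hk (mem_inter.1 h).2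
      have hmono := hsup.insert_sub_le_insert_sub (inter_subset_right (s₁ := S))
        (apply_notMem_seg π hk)
      rw [inter_insert_of_mem hS, sum_insert hnotMem, marg_apply_of_lt π m hk, seg_succ π hk]
      linarith
    · rwa [inter_insert_of_notMem hS]

end Enumeration

theorem stmt4 {N : Type*} [Fintype N] [DecidableEq N]
    (m : Finset N → ℝ) (hm : m ∅ = 0) (hsup : Supermod m)
    (π : Fin (Fintype.card N) ≃ N) :
    marg m π ∈ core m := by
  have hseg := seg_of_card_le π le_rfl
  refine ⟨?_, fun S => ?_⟩
  · simpa [hseg] using sum_marg_seg π hm le_rfl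
  · simpa [hseg] using le_sum_marg_inter_seg π hm hsup S le_rfl
end

section
/- If m is a supermodular game, then for every vector v in the core C(m), the class of tightness sets S^m_v = { S ⊆ N : Σ_{i∈S} v_i = m(S) } is closed under intersection and union. -/
open Finset

/- The excesses `∑ v - m` on `S ∪ T` and `S ∩ T` are nonnegative, and by supermodularity and
`∑_{S ∪ T} v + ∑_{S ∩ T} v = ∑_S v + ∑_T v` their total is at most the total excess on `S`
and `T`, which is zero. -/
theorem sum_union_eq_and_sum_inter_eq_of_supermod {N : Type*} [DecidableEq N]
    {m : Finset N → ℝ} (hsup : Supermod m) {v : N → ℝ} (hv : ∀ S, m S ≤ ∑ i ∈ S, v i)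
    {S T : Finset N} (hS : ∑ i ∈ S, v i = m S) (hT : ∑ i ∈ T, v i = m T) :
    (∑ i ∈ S ∪ T, v i = m (S ∪ T)) ∧ (∑ i ∈ S ∩ T, v i = m (S ∩ T)) := by
  have hmodular : ∑ i ∈ S ∪ T, v i + ∑ i ∈ S ∩ T, v i = ∑ i ∈ S, v i + ∑ i ∈ T, v i :=
    sum_union_inter
  have hsupST := hsup S T
  have hunion := hv (S ∪ T)
  have hinter := hv (S ∩ T)
  constructor <;> linarith

theorem stmt8_general {N : Type*} [Fintype N] [DecidableEq N]
    (m : Finset N → ℝ) (hsup : Supermod m)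
    (v : N → ℝ) (hv : v ∈ core m)
    (S T : Finset N) (hS : ∑ i ∈ S, v i = m S) (hT : ∑ i ∈ T, v i = m T) :
    (∑ i ∈ S ∪ T, v i = m (S ∪ T)) ∧ (∑ i ∈ S ∩ T, v i = m (S ∩ T)) :=
  sum_union_eq_and_sum_inter_eq_of_supermod hsup hv.2 hS hT

/-- For a supermodular game, the class of tightness sets of any core element is closed
under intersection and union. -/
theorem stmt8 {N : Type*} [Fintype N] [DecidableEq N]
    (m : Finset N → ℝ) (hm : m ∅ = 0) (hsup : Supermod m)
    (v : N → ℝ) (hv : v ∈ core m)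
    (S T : Finset N) (hS : ∑ i ∈ S, v i = m S) (hT : ∑ i ∈ T, v i = m T) :
    (∑ i ∈ S ∪ T, v i = m (S ∪ T)) ∧ (∑ i ∈ S ∩ T, v i = m (S ∩ T)) :=
  stmt8_general m hsup v hv S T hS hT
end

section
/- Every supermodular game is exact: if m is supermodular, then for every S ⊆ N there exists v ∈ C(m) with Σ_{i∈S} v_i = m(S), i.e., m(S) = min_{v∈C(m)} Σ_{i∈S} v_i. -/
/-!
Order the players so that those of `S` come first and pay each player his marginal
contribution `m (Pᵢ ∪ {i}) - m Pᵢ` to the set `Pᵢ` of players before him. Supermodularity,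
applied to a coalition `T` and to the predecessors of its last member, shows by induction on `T`
that this marginal vector lies in the core; on every initial segment, in particular on `S`,
the payments telescope to `m` of that segment.
-/

open Finset

section MarginalVector

variable {N α : Type*} [Fintype N] [LinearOrder α]

def predecessors (r : N → α) (i : N) : Finset N :=
  univ.filter fun j => r j < r i

def marginalVector [DecidableEq N] (m : Finset N → ℝ) (r : N → α) (i : N) : ℝ :=
  m (insert i (predecessors r i)) - m (predecessors r i)

lemma notMem_predecessors (r : N → α) (i : N) : i ∉ predecessors r i := by
  simp [predecessors]

lemma subset_predecessors_of_forall_le {r : N → α} (hr : Function.Injective r) {a : N}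
    {s : Finset N} (ha : a ∉ s) (hmax : ∀ x ∈ s, r x ≤ r a) : s ⊆ predecessors r a := by
  intro x hx
  simp only [predecessors, mem_filter, mem_univ, true_and]
  exact (hmax x hx).lt_of_ne fun h => ha (hr h ▸ hx)

lemma le_sum_marginalVector [DecidableEq N] {m : Finset N → ℝ} (hm : m ∅ = 0)
    (hsup : Supermod m) {r : N → α} (hr : Function.Injective r) (T : Finset N) :
    m T ≤ ∑ i ∈ T, marginalVector m r i := by
  induction T using Finset.induction_on_max_value r with
  | empty => simp [hm]
  | insert a s ha hmax ih =>
    have hs := subset_predecessors_of_forall_le hr ha hmax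
    have hunion : insert a s ∪ predecessors r a = insert a (predecessors r a) := by
      rw [insert_union, union_eq_right.mpr hs]
    have hinter : insert a s ∩ predecessors r a = s := by
      rw [insert_inter_of_notMem (notMem_predecessors r a), inter_eq_left.mpr hs]
    have hstep := hsup (insert a s) (predecessors r a)
    rw [hunion, hinter] at hstep
    rw [sum_insert ha, marginalVector]
    linarith

lemma sum_marginalVector_of_predecessors_subset [DecidableEq N] {m : Finset N → ℝ}
    (hm : m ∅ = 0) {r : N → α} (hr : Function.Injective r) (T : Finset N)
    (hT : ∀ i ∈ T, predecessors r i ⊆ T) :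
    ∑ i ∈ T, marginalVector m r i = m T := by
  induction T using Finset.induction_on_max_value r with
  | empty => simp [hm]
  | insert a s ha hmax ih =>
    have hpred : predecessors r a = s := by
      refine (subset_predecessors_of_forall_le hr ha hmax).antisymm' fun x hx => ?_
      have hxa : x ≠ a := ne_of_mem_of_not_mem hx (notMem_predecessors r a)
      exact (mem_insert.mp (hT a (mem_insert_self a s) hx)).resolve_left hxa
    have hs : ∀ i ∈ s, predecessors r i ⊆ s := by
      intro i hi j hj
      have hji : r j < r i := (mem_filter.mp hj).2
      rw [← hpred]
      exact mem_filter.mpr ⟨mem_univ j, hji.trans_le (hmax i hi)⟩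
    rw [sum_insert ha, ih hs, marginalVector, hpred]
    ring

lemma marginalVector_mem_core [DecidableEq N] {m : Finset N → ℝ} (hm : m ∅ = 0)
    (hsup : Supermod m) {r : N → α} (hr : Function.Injective r) :
    marginalVector m r ∈ core m :=
  ⟨sum_marginalVector_of_predecessors_subset hm hr univ fun _ _ => subset_univ _,
    le_sum_marginalVector hm hsup hr⟩

end MarginalVector

lemma exists_injective_predecessors_subset {N : Type*} [Fintype N] [DecidableEq N]
    (S : Finset N) :
    ∃ r : N → Bool ×ₗ Fin (Fintype.card N), Function.Injective r ∧
      ∀ i ∈ S, predecessors r i ⊆ S := by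
  refine ⟨fun i => toLex (decide (i ∉ S), Fintype.equivFin N i), ?_, ?_⟩
  · intro i j h
    exact (Fintype.equivFin N).injective (Prod.ext_iff.mp (toLex.injective h)).2
  · intro i hi j hj
    have hji := Prod.Lex.toLex_lt_toLex'.mp (mem_filter.mp hj).2
    by_contra hjS
    simp [hi, hjS, Bool.le_iff_imp] at hji

theorem stmt11_general {N : Type*} [Fintype N] [DecidableEq N]
    (m : Finset N → ℝ) (hm : m ∅ = 0) (hsup : Supermod m) (S : Finset N) :
    IsLeast {r : ℝ | ∃ v ∈ core m, r = ∑ i ∈ S, v i} (m S) := by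
  obtain ⟨r, hr, hS⟩ := exists_injective_predecessors_subset S
  refine ⟨⟨marginalVector m r, marginalVector_mem_core hm hsup hr,
    (sum_marginalVector_of_predecessors_subset hm hr S hS).symm⟩, ?_⟩
  rintro _ ⟨v, hv, rfl⟩
  exact hv.2 S

/-- Every supermodular game is exact: for every `S` the bound `m S` is attained by some
core element, i.e. `m S = min_{v ∈ C(m)} ∑_{i∈S} v i`. -/
theorem stmt11 {N : Type*} [Fintype N] [DecidableEq N] [Nonempty N]
    (m : Finset N → ℝ) (hm : m ∅ = 0) (hsup : Supermod m) (S : Finset N) :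
    IsLeast {r : ℝ | ∃ v ∈ core m, r = ∑ i ∈ S, v i} (m S) :=
  stmt11_general m hm hsup S
end

section
/- The conditional independence model produced by a supermodular function is a semi-graphoid: for pairwise disjoint X,Y,Z,W ⊆ N, writing X⊥Y|Z [m] iff m(X∪Y∪Z)+m(Z)−m(X∪Z)−m(Y∪Z)=0, one has ∅⊥Y|Z, symmetry X⊥Y|Z ⟺ Y⊥X|Z, and X⊥(Y∪W)|Z ⟺ (X⊥Y|Z∪W and X⊥W|Z). -/
open Finset

/-- The conditional independence statement `X ⊥ Y | Z [m]`. -/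
def CI {N : Type*} [DecidableEq N] (m : Finset N → ℝ) (X Y Z : Finset N) : Prop :=
  m (X ∪ Y ∪ Z) + m Z - m (X ∪ Z) - m (Y ∪ Z) = 0

lemma ci_nonneg {N : Type*} [DecidableEq N] (m : Finset N → ℝ) (hsup : Supermod m)
    (X Y Z : Finset N) (h : Disjoint X Y) :
    0 ≤ m (X ∪ Y ∪ Z) + m Z - m (X ∪ Z) - m (Y ∪ Z) := by
  have h1 := hsup (X ∪ Z) (Y ∪ Z)
  have hu : (X ∪ Z) ∪ (Y ∪ Z) = X ∪ Y ∪ Z := by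
    ext a; simp [or_assoc, or_comm, or_left_comm]
  have hi : (X ∪ Z) ∩ (Y ∪ Z) = Z := by
    ext a
    simp only [mem_inter, mem_union]
    constructor
    · rintro ⟨hx | hz, hy | hz'⟩
      · exact absurd hy (Finset.disjoint_left.mp h hx)
      · exact hz'
      · exact hz
      · exact hz
    · exact fun hz => ⟨Or.inr hz, Or.inr hz⟩
  rw [hu, hi] at h1
  linarith

/-- The CI model produced by a supermodular function is a semi-graphoid. -/
theorem stmt16 {N : Type*} [Fintype N] [DecidableEq N]
    (m : Finset N → ℝ) (hsup : Supermod m)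
    (X Y Z W : Finset N)
    (hXY : Disjoint X Y) (hXZ : Disjoint X Z) (hXW : Disjoint X W)
    (hYZ : Disjoint Y Z) (hYW : Disjoint Y W) (hZW : Disjoint Z W) :
    CI m ∅ Y Z ∧
    (CI m X Y Z ↔ CI m Y X Z) ∧
    (CI m X (Y ∪ W) Z ↔ (CI m X Y (Z ∪ W) ∧ CI m X W Z)) := by
  refine ⟨?_, ?_, ?_⟩
  · unfold CI
    rw [Finset.empty_union, Finset.empty_union]
    ring
  · unfold CI
    have h : Y ∪ X ∪ Z = X ∪ Y ∪ Z := by rw [Finset.union_comm Y X]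
    rw [h]
    constructor <;> intro hh <;> linarith
  · unfold CI
    have e1 : X ∪ (Y ∪ W) ∪ Z = X ∪ Y ∪ (Z ∪ W) := by
      ext a; simp only [mem_union]; tauto
    have e2 : Y ∪ W ∪ Z = Y ∪ (Z ∪ W) := by
      ext a; simp only [mem_union]; tauto
    have e3 : X ∪ W ∪ Z = X ∪ (Z ∪ W) := by
      ext a; simp only [mem_union]; tauto
    have n1 : 0 ≤ m (X ∪ Y ∪ (Z ∪ W)) + m (Z ∪ W) - m (X ∪ (Z ∪ W)) - m (Y ∪ (Z ∪ W)) :=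
      ci_nonneg m hsup X Y (Z ∪ W) hXY
    have n2 : 0 ≤ m (X ∪ W ∪ Z) + m Z - m (X ∪ Z) - m (W ∪ Z) :=
      ci_nonneg m hsup X W Z hXW
    rw [e1, e2, e3]
    rw [e3] at n2
    have w1 : W ∪ Z = Z ∪ W := Finset.union_comm W Z
    rw [w1] at n2
    rw [w1]
    constructor
    · intro hh
      constructor <;> linarith
    · rintro ⟨h1, h2⟩
      linarith
end
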